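/- Let d ≥ 3, α₁,…,α_d ∈ (0,2), and let A be a d×d real diagonal matrix with all diagonal entries A_jj nonzero. Then for every r ∈ (0,1), the integral ∫_{B_r(0)} (∑_{j=1}^d |A_jj ξ_j|^{α_j})^{-1} dξ is finite. (Hence the corresponding anisotropic Lévy process is transient.) -/

import Mathlib

open MeasureTheory

lemma integrableOn_abs_rpow_Icc {q : ℝ} (hq : -1 < q) :
    IntegrableOn (fun x : ℝ => |x| ^ q) (Set.Icc (-1:ℝ) 1) := by
  have h01 : IntervalIntegrable (fun x : ℝ => |x| ^ q) volume 0 1 := by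
    have h : IntervalIntegrable (fun x : ℝ => x ^ q) volume 0 1 :=
      intervalIntegral.intervalIntegrable_rpow' hq
    rw [intervalIntegrable_iff_integrableOn_Ioc_of_le (by norm_num : (0:ℝ) ≤ 1)] at h ⊢
    exact h.congr_fun (fun x hx => by rw [abs_of_pos hx.1]) measurableSet_Ioc
  have hneg : IntervalIntegrable (fun x : ℝ => |x| ^ q) volume (-1) 0 := by
    have h := (IntervalIntegrable.iff_comp_neg enorm_ne_top).mp h01
    simpa [abs_neg] using h.symm
  have h := hneg.trans h01
  rwa [intervalIntegrable_iff_integrableOn_Icc_of_le (by norm_num : (-1:ℝ) ≤ 1)] at h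

lemma aux_sq_cube_inv (x : ℝ) : ((x ^ 2) ^ ((1:ℝ)/3))⁻¹ = |x| ^ (-(2/3) : ℝ) := by
  have h1 : (x ^ 2) ^ ((1:ℝ)/3) = |x| ^ ((2:ℝ)/3) := by
    rw [← sq_abs, ← Real.rpow_natCast |x| 2, ← Real.rpow_mul (abs_nonneg x)]
    norm_num
  rw [h1, ← Real.rpow_neg (abs_nonneg x)]

/-- Transience integral: ∫_{B_r(0)} (∑_j |A_jj ξ_j|^{α_j})⁻¹ dξ is finite for d ≥ 3. -/
theorem stmt4 (d : ℕ) (hd : 3 ≤ d) (α : Fin d → ℝ) (hα : ∀ j, α j ∈ Set.Ioo (0:ℝ) 2)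
    (A : Fin d → ℝ) (hA : ∀ j, A j ≠ 0) (r : ℝ) (hr : r ∈ Set.Ioo (0:ℝ) 1) :
    MeasureTheory.IntegrableOn
      (fun ξ : EuclideanSpace ℝ (Fin d) => (∑ j, |A j * ξ j| ^ α j)⁻¹)
      (Metric.ball 0 r) := by
  obtain ⟨hr0, hr1⟩ := hr
  let j0 : Fin d := ⟨0, by omega⟩
  let j1 : Fin d := ⟨1, by omega⟩
  let j2 : Fin d := ⟨2, by omega⟩
  have hne01 : j0 ≠ j1 := fun h => by simpa [j0, j1, Fin.ext_iff] using h
  have hne02 : j0 ≠ j2 := fun h => by simpa [j0, j2, Fin.ext_iff] using h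
  have hne12 : j1 ≠ j2 := fun h => by simpa [j1, j2, Fin.ext_iff] using h
  set c : ℝ := Finset.univ.inf' ⟨j0, Finset.mem_univ _⟩ (fun j => min ((A j)^2) 1) with hcdef
  have hc0 : 0 < c := by
    rw [hcdef]; apply (Finset.lt_inf'_iff _).2
    intro j _
    exact lt_min (lt_of_le_of_ne (sq_nonneg _) (Ne.symm (pow_ne_zero 2 (hA j)))) one_pos
  have hc_min : ∀ j, c ≤ min ((A j)^2) 1 := fun j => Finset.inf'_le _ (Finset.mem_univ j)
  have hc1 : c ≤ 1 := le_trans (hc_min j0) (min_le_right _ _)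
  -- coordinates are bounded by the norm
  have habs : ∀ (ξ : EuclideanSpace ℝ (Fin d)) (j : Fin d), |ξ j| ≤ ‖ξ‖ := by
    intro ξ j
    rw [EuclideanSpace.norm_eq, ← Real.sqrt_sq_eq_abs]
    apply Real.sqrt_le_sqrt
    have := Finset.single_le_sum (f := fun i => ‖ξ i‖^2)
      (fun i _ => sq_nonneg _) (Finset.mem_univ j)
    simpa [Real.norm_eq_abs, sq_abs] using this
  have hball : ∀ ξ ∈ Metric.ball (0 : EuclideanSpace ℝ (Fin d)) r, ∀ j, |ξ j| ≤ 1 := by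
    intro ξ hξ j
    have hn : ‖ξ‖ < r := by simpa [Metric.mem_ball, dist_zero_right] using hξ
    exact (habs ξ j).trans (hn.le.trans hr1.le)
  -- termwise lower bound
  have hterm : ∀ ξ ∈ Metric.ball (0 : EuclideanSpace ℝ (Fin d)) r, ∀ j,
      c * (ξ j)^2 ≤ |A j * ξ j| ^ α j := by
    intro ξ hξ j
    rcases eq_or_ne (ξ j) 0 with h0 | h0
    · rw [h0]
      simp [Real.zero_rpow (ne_of_gt (hα j).1)]
    · have htpos : (0:ℝ) < |A j * ξ j| := abs_pos.mpr (mul_ne_zero (hA j) h0)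
      rcases le_or_gt (|A j * ξ j|) 1 with h1 | h1
      · have h2 : |A j * ξ j| ^ (2:ℝ) ≤ |A j * ξ j| ^ α j :=
          Real.rpow_le_rpow_of_exponent_ge htpos h1 (hα j).2.le
        have h3 : |A j * ξ j| ^ (2:ℝ) = (A j)^2 * (ξ j)^2 := by
          rw [show (2:ℝ) = ((2:ℕ):ℝ) by norm_num, Real.rpow_natCast, sq_abs, mul_pow]
        have h4 : c * (ξ j)^2 ≤ (A j)^2 * (ξ j)^2 :=
          mul_le_mul_of_nonneg_right ((hc_min j).trans (min_le_left _ _)) (sq_nonneg _)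
        calc c * (ξ j)^2 ≤ (A j)^2 * (ξ j)^2 := h4
          _ = |A j * ξ j| ^ (2:ℝ) := h3.symm
          _ ≤ |A j * ξ j| ^ α j := h2
      · have h2 : (1:ℝ) ≤ |A j * ξ j| ^ α j := by
          have := Real.rpow_le_rpow_of_exponent_le h1.le (le_of_lt (hα j).1)
          rwa [Real.rpow_zero] at this
        have h4 : (ξ j)^2 ≤ 1 := by
          have h5 := hball ξ hξ j
          nlinarith [abs_nonneg (ξ j), sq_abs (ξ j)]
        nlinarith [hc0, sq_nonneg (ξ j)]
  -- sum lower bound using three coordinates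
  have hsum : ∀ ξ ∈ Metric.ball (0 : EuclideanSpace ℝ (Fin d)) r,
      c * ((ξ j0)^2 + (ξ j1)^2 + (ξ j2)^2) ≤ ∑ j, |A j * ξ j| ^ α j := by
    intro ξ hξ
    have h1 : ∑ j ∈ ({j0, j1, j2} : Finset (Fin d)), c * (ξ j)^2
        ≤ ∑ j, c * (ξ j)^2 :=
      Finset.sum_le_sum_of_subset_of_nonneg (Finset.subset_univ _)
        (fun j _ _ => by positivity)
    have h2 : ∑ j, c * (ξ j)^2 ≤ ∑ j, |A j * ξ j| ^ α j :=
      Finset.sum_le_sum fun j _ => hterm ξ hξ j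
    have h3 : ∑ j ∈ ({j0, j1, j2} : Finset (Fin d)), c * (ξ j)^2
        = c * ((ξ j0)^2 + (ξ j1)^2 + (ξ j2)^2) := by
      rw [Finset.sum_insert (by simp [hne01, hne02]),
          Finset.sum_insert (by simp [hne12]), Finset.sum_singleton]
      ring
    linarith
  -- the dominating function
  set p : Fin d → ℝ := fun j => if (j:ℕ) < 3 then -(2/3 : ℝ) else 0 with hpdef
  set G : Fin d → ℝ → ℝ :=
    fun j => Set.indicator (Set.Icc (-1:ℝ) 1) (fun x => |x| ^ p j) with hGdef
  have hGint : ∀ j, Integrable (G j) := by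
    intro j
    rw [hGdef]
    rw [integrable_indicator_iff measurableSet_Icc]
    apply integrableOn_abs_rpow_Icc
    simp only [hpdef]
    split_ifs <;> norm_num
  have hprodInt : Integrable (fun ξ : EuclideanSpace ℝ (Fin d) => ∏ j, G j (ξ j)) := by
    have h1 : Integrable (fun x : Fin d → ℝ => ∏ j, G j (x j)) :=
      Integrable.fintype_prod (f := G) hGint
    have h2 := ((EuclideanSpace.volume_preserving_symm_measurableEquiv_toLp (Fin d)).integrable_comp_emb
      (MeasurableEquiv.measurableEmbedding _)).mpr h1
    exact h2
  -- measurability of the integrand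
  have hmeas : AEStronglyMeasurable
      (fun ξ : EuclideanSpace ℝ (Fin d) => (∑ j, |A j * ξ j| ^ α j)⁻¹)
      (volume.restrict (Metric.ball (0 : EuclideanSpace ℝ (Fin d)) r)) := by
    apply Measurable.aestronglyMeasurable
    apply Measurable.inv
    apply Finset.measurable_sum
    intro j _
    have hj0 : Continuous fun ξ : EuclideanSpace ℝ (Fin d) => ξ j :=
      (EuclideanSpace.proj (𝕜 := ℝ) j).continuous
    have hj : Continuous fun ξ : EuclideanSpace ℝ (Fin d) => |A j * ξ j| :=
      (continuous_const.mul hj0).abs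
    exact (hj.rpow_const (fun x => Or.inr (hα j).1.le)).measurable
  -- coordinate hyperplanes are null
  have hnull : ∀ j : Fin d, volume {ξ : EuclideanSpace ℝ (Fin d) | ξ j = 0} = 0 := by
    intro j
    have hker : ({ξ : EuclideanSpace ℝ (Fin d) | ξ j = 0} : Set _)
        = (LinearMap.ker ((EuclideanSpace.proj j : EuclideanSpace ℝ (Fin d) →L[ℝ] ℝ)
            : EuclideanSpace ℝ (Fin d) →ₗ[ℝ] ℝ) : Set _) := by
      ext ξ
      simp [LinearMap.mem_ker]
    rw [hker]
    apply Measure.addHaar_submodule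
    intro htop
    have h2 : EuclideanSpace.single j (1:ℝ) ∈ LinearMap.ker
        ((EuclideanSpace.proj j : EuclideanSpace ℝ (Fin d) →L[ℝ] ℝ)
          : EuclideanSpace ℝ (Fin d) →ₗ[ℝ] ℝ) := htop ▸ Submodule.mem_top
    rw [LinearMap.mem_ker] at h2
    simp at h2
  -- the a.e. bound
  have hae : ∀ᵐ ξ ∂(volume.restrict (Metric.ball (0 : EuclideanSpace ℝ (Fin d)) r)),
      ‖(∑ j, |A j * ξ j| ^ α j)⁻¹‖ ≤ (3*c)⁻¹ * ∏ j, G j (ξ j) := by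
    have h0 : ∀ᵐ ξ : EuclideanSpace ℝ (Fin d) ∂volume, ¬ (ξ j0 = 0) := by
      rw [ae_iff]; simpa using hnull j0
    have h1 : ∀ᵐ ξ : EuclideanSpace ℝ (Fin d) ∂volume, ¬ (ξ j1 = 0) := by
      rw [ae_iff]; simpa using hnull j1
    have h2 : ∀ᵐ ξ : EuclideanSpace ℝ (Fin d) ∂volume, ¬ (ξ j2 = 0) := by
      rw [ae_iff]; simpa using hnull j2
    filter_upwards [ae_restrict_mem measurableSet_ball, ae_restrict_of_ae h0,
      ae_restrict_of_ae h1, ae_restrict_of_ae h2] with ξ hξ h0' h1' h2'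
    set S := ∑ j, |A j * ξ j| ^ α j with hSdef
    set Q : ℝ := ((ξ j0)^2) ^ ((1:ℝ)/3) * ((ξ j1)^2) ^ ((1:ℝ)/3) * ((ξ j2)^2) ^ ((1:ℝ)/3)
      with hQdef
    have hsq0 : 0 < (ξ j0)^2 := lt_of_le_of_ne (sq_nonneg _) (Ne.symm (pow_ne_zero 2 h0'))
    have hsq1 : 0 < (ξ j1)^2 := lt_of_le_of_ne (sq_nonneg _) (Ne.symm (pow_ne_zero 2 h1'))
    have hsq2 : 0 < (ξ j2)^2 := lt_of_le_of_ne (sq_nonneg _) (Ne.symm (pow_ne_zero 2 h2'))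
    have hQpos : 0 < Q :=
      mul_pos (mul_pos (Real.rpow_pos_of_pos hsq0 _) (Real.rpow_pos_of_pos hsq1 _))
        (Real.rpow_pos_of_pos hsq2 _)
    have hAM : 3 * Q ≤ (ξ j0)^2 + (ξ j1)^2 + (ξ j2)^2 := by
      have h := Real.geom_mean_le_arith_mean3_weighted
        (by norm_num : (0:ℝ) ≤ 1/3) (by norm_num : (0:ℝ) ≤ 1/3) (by norm_num : (0:ℝ) ≤ 1/3)
        (sq_nonneg (ξ j0)) (sq_nonneg (ξ j1)) (sq_nonneg (ξ j2))
        (by norm_num : (1:ℝ)/3 + 1/3 + 1/3 = 1)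
      rw [hQdef]
      linarith
    have hS : 3 * c * Q ≤ S := by
      calc 3 * c * Q = c * (3 * Q) := by ring
        _ ≤ c * ((ξ j0)^2 + (ξ j1)^2 + (ξ j2)^2) := mul_le_mul_of_nonneg_left hAM hc0.le
        _ ≤ S := hsum ξ hξ
    have h3cQ : 0 < 3 * c * Q := by positivity
    have hSpos : 0 < S := lt_of_lt_of_le h3cQ hS
    rw [Real.norm_eq_abs, abs_of_pos (inv_pos.mpr hSpos)]
    have hstep : S⁻¹ ≤ (3*c*Q)⁻¹ := by
      apply inv_anti₀ h3cQ hS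
    have hmem : ∀ j, ξ j ∈ Set.Icc (-1:ℝ) 1 := by
      intro j
      have := abs_le.mp (hball ξ hξ j)
      exact ⟨this.1, this.2⟩
    have hprodeq : ∏ j, G j (ξ j) = Q⁻¹ := by
      have hGval : ∀ j, G j (ξ j) = |ξ j| ^ p j := fun j => Set.indicator_of_mem (hmem j) _
      have e1 : ∏ j, G j (ξ j) = ∏ j, |ξ j| ^ p j :=
        Finset.prod_congr rfl fun j _ => hGval j
      have e2 : ∏ j ∈ ({j0, j1, j2} : Finset (Fin d)), |ξ j| ^ p j
          = ∏ j, |ξ j| ^ p j := by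
        apply Finset.prod_subset (Finset.subset_univ _)
        intro j _ hj
        simp only [Finset.mem_insert, Finset.mem_singleton, not_or] at hj
        obtain ⟨hj0, hj1, hj2⟩ := hj
        have v0 : (j:ℕ) ≠ 0 := fun h => hj0 (Fin.ext h)
        have v1 : (j:ℕ) ≠ 1 := fun h => hj1 (Fin.ext h)
        have v2 : (j:ℕ) ≠ 2 := fun h => hj2 (Fin.ext h)
        have : ¬ ((j:ℕ) < 3) := by omega
        simp [hpdef, this]
      have e3 : ∏ j ∈ ({j0, j1, j2} : Finset (Fin d)), |ξ j| ^ p j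
          = |ξ j0| ^ p j0 * (|ξ j1| ^ p j1 * |ξ j2| ^ p j2) := by
        rw [Finset.prod_insert (by simp [hne01, hne02]),
            Finset.prod_insert (by simp [hne12]), Finset.prod_singleton]
      have hp0 : p j0 = -(2/3 : ℝ) := by simp [hpdef, j0]
      have hp1 : p j1 = -(2/3 : ℝ) := by simp [hpdef, j1]
      have hp2 : p j2 = -(2/3 : ℝ) := by simp [hpdef, j2]
      rw [e1, ← e2, e3, hp0, hp1, hp2, hQdef]
      rw [mul_inv, mul_inv, aux_sq_cube_inv, aux_sq_cube_inv, aux_sq_cube_inv]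
      ring
    calc S⁻¹ ≤ (3*c*Q)⁻¹ := hstep
      _ = (3*c)⁻¹ * Q⁻¹ := by rw [mul_inv]
      _ = (3*c)⁻¹ * ∏ j, G j (ξ j) := by rw [hprodeq]
  exact Integrable.mono' ((hprodInt.const_mul ((3*c)⁻¹)).restrict) hmeas hae
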